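/- arXiv:1810.01819 — 8 statements merged into one kernel-verified Lean document; each statement's English description precedes it below -/
import Mathlib

section
/- Let n ≥ 3 be an odd integer, let m ≥ 2 be an integer, and let x, y be integers with y ≥ 1 satisfying x^n − m·y^n = 1 or x^n − m·y^n = −1. Then |x − m^{1/n}·y| ≤ 1/(c₁·y^{n−1}), where c₁ = m^{(n−1)/n}·c₂ and c₂ = ∏_{j=1}^{n−1} |sin(2πj/n)|. -/
/-!
Put `β = m^{1/n} y` and `ζ = e^{2πi/n}`. Over `ℂ`, `x^n - β^n = ∏_{j<n} (x - ζ^j β)` has absolute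
value `|x^n - m y^n| = 1`. The factor `j = 0` is `x - β`; every other factor is at least its
imaginary part `|sin(2πj/n)| β` in absolute value, and these sines are nonzero because `n` is odd.
Hence `|x - β| · c₂ β^{n-1} ≤ 1`, and `c₂ β^{n-1} = c₁ y^{n-1}`.
-/

open Finset Real Complex Polynomial

lemma abs_sin_mul_le_norm_sub (x θ β : ℝ) (hβ : 0 ≤ β) :
    |Real.sin θ| * β ≤ ‖(x : ℂ) - exp (θ * I) * β‖ :=
  calc |Real.sin θ| * β = |((x : ℂ) - exp (θ * I) * β).im| := by
        simp [exp_ofReal_mul_I_im, abs_mul, abs_of_nonneg hβ]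
    _ ≤ ‖(x : ℂ) - exp (θ * I) * β‖ := abs_im_le_norm _

lemma pow_sub_pow_eq_prod_sub_exp_mul (n : ℕ) (hn : 0 < n) (x β : ℂ) :
    x ^ n - β ^ n = ∏ j ∈ range n, (x - exp (2 * π * I / n) ^ j * β) := by
  simpa [eval_prod] using congrArg (eval x)
    (X_pow_sub_C_eq_prod (isPrimitiveRoot_exp n hn.ne') hn (rfl : β ^ n = β ^ n))

lemma prod_range_eq_mul_prod_Icc {M : Type*} [CommMonoid M] (f : ℕ → M) {n : ℕ} (hn : 0 < n) :
    ∏ j ∈ range n, f j = f 0 * ∏ j ∈ Icc 1 (n - 1), f j := by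
  rw [prod_range_eq_mul_Ico f hn, Icc_sub_one_right_eq_Ico_of_not_isMin (by simpa using hn.ne')]

lemma abs_sub_mul_prod_abs_sin_le_abs_pow_sub_pow (n : ℕ) (hn : 0 < n) (x β : ℝ)
    (hβ : 0 ≤ β) :
    |x - β| * ((∏ j ∈ Icc 1 (n - 1), |Real.sin (2 * π * j / n)|) * β ^ (n - 1)) ≤
      |x ^ n - β ^ n| := by
  have hroot (j : ℕ) : exp (2 * π * I / n) ^ j = exp ((2 * π * j / n : ℝ) * I) := by
    rw [← Complex.exp_nat_mul]
    push_cast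
    ring_nf
  have hcard : #(Icc 1 (n - 1)) = n - 1 := by simp
  calc |x - β| * ((∏ j ∈ Icc 1 (n - 1), |Real.sin (2 * π * j / n)|) * β ^ (n - 1))
      = ‖(x : ℂ) - exp (2 * π * I / n) ^ 0 * β‖ *
          ∏ j ∈ Icc 1 (n - 1), (|Real.sin (2 * π * j / n)| * β) := by
        rw [prod_mul_distrib, prod_const, hcard, pow_zero, one_mul, ← ofReal_sub, norm_real,
          Real.norm_eq_abs]
    _ ≤ ‖(x : ℂ) - exp (2 * π * I / n) ^ 0 * β‖ *
          ∏ j ∈ Icc 1 (n - 1), ‖(x : ℂ) - exp (2 * π * I / n) ^ j * β‖ := by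
        gcongr with j
        rw [hroot]
        exact abs_sin_mul_le_norm_sub x _ β hβ
    _ = |x ^ n - β ^ n| := by
        rw [← prod_range_eq_mul_prod_Icc (fun j ↦ ‖(x : ℂ) - exp (2 * π * I / n) ^ j * β‖) hn,
          ← norm_prod, ← pow_sub_pow_eq_prod_sub_exp_mul n hn, ← ofReal_pow, ← ofReal_pow,
          ← ofReal_sub, norm_real, Real.norm_eq_abs]

lemma sin_two_pi_mul_div_ne_zero {n j : ℕ} (hodd : Odd n) (hj0 : 0 < j) (hjn : j < n) :
    Real.sin (2 * π * j / n) ≠ 0 := by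
  rw [Ne, Real.sin_eq_zero_iff]
  rintro ⟨k, hk⟩
  have hkn : (k : ℝ) * n = 2 * j := by
    have hn : (n : ℝ) ≠ 0 := by exact_mod_cast (by omega : n ≠ 0)
    field_simp at hk
    linarith
  have hkn' : k * (n : ℤ) = 2 * j := by exact_mod_cast hkn
  -- `0 < k n = 2 j < 2 n` forces `k = 1`, i.e. `n = 2 j`.
  have hk1 : k = 1 := by
    rcases le_or_gt k 0 with hk | hk
    · nlinarith
    rcases le_or_gt 2 k with hk2 | hk2
    · nlinarith
    omega
  rw [hk1, one_mul] at hkn'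
  obtain ⟨t, ht⟩ := hodd
  omega

lemma prod_abs_sin_two_pi_mul_div_pos {n : ℕ} (hodd : Odd n) :
    0 < ∏ j ∈ Icc 1 (n - 1), |Real.sin (2 * π * j / n)| := by
  refine prod_pos fun j hj ↦ abs_pos.mpr (sin_two_pi_mul_div_ne_zero hodd ?_ ?_)
  all_goals
    have := hodd.pos
    simp only [mem_Icc] at hj
    omega

lemma rpow_one_div_pow_sub_one {x : ℝ} (hx : 0 ≤ x) {n : ℕ} (hn : 0 < n) :
    (x ^ ((1 : ℝ) / n)) ^ (n - 1) = x ^ (((n : ℝ) - 1) / n) := by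
  rw [← rpow_natCast, ← rpow_mul hx, Nat.cast_sub hn, Nat.cast_one]
  ring_nf

theorem stmt_1_general (n : ℕ) (hodd : Odd n) (m : ℤ) (hm : 2 ≤ m)
    (x y : ℤ) (hy : 1 ≤ y)
    (h : x ^ n - m * y ^ n = 1 ∨ x ^ n - m * y ^ n = -1) :
    |(x : ℝ) - (m : ℝ) ^ ((1 : ℝ) / n) * (y : ℝ)| ≤
      1 / (((m : ℝ) ^ (((n : ℝ) - 1) / n) *
        ∏ j ∈ Finset.Icc 1 (n - 1), |Real.sin (2 * Real.pi * (j : ℝ) / n)|) *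
        (y : ℝ) ^ (n - 1)) := by
  have hn : 0 < n := hodd.pos
  have hm0 : (0 : ℝ) < m := by exact_mod_cast (by omega : (0 : ℤ) < m)
  have hy0 : (0 : ℝ) < y := by exact_mod_cast hy
  set α : ℝ := (m : ℝ) ^ ((1 : ℝ) / n)
  have hαn : α ^ n = m := by
    simp only [α, one_div]
    exact rpow_inv_natCast_pow hm0.le hn.ne'
  have hunit : |(x : ℝ) ^ n - (α * y) ^ n| = 1 := by
    rw [mul_pow, hαn]
    have hcast : (x : ℝ) ^ n - m * y ^ n = ((x ^ n - m * y ^ n : ℤ) : ℝ) := by push_cast; ring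
    rcases h with h | h <;> simp [hcast, h]
  have key := abs_sub_mul_prod_abs_sin_le_abs_pow_sub_pow n hn x (α * y) (by positivity)
  set c₂ : ℝ := ∏ j ∈ Icc 1 (n - 1), |Real.sin (2 * π * j / n)|
  have hc : ((m : ℝ) ^ (((n : ℝ) - 1) / n) * c₂) * (y : ℝ) ^ (n - 1) = c₂ * (α * y) ^ (n - 1) := by
    rw [mul_pow, rpow_one_div_pow_sub_one hm0.le hn]
    ring
  have hpos : 0 < c₂ * (α * y) ^ (n - 1) := by
    have hc₂ : 0 < c₂ := prod_abs_sin_two_pi_mul_div_pos hodd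
    have hα : 0 < α := rpow_pos_of_pos hm0 _
    positivity
  rw [hc, le_div_iff₀ hpos]
  linarith

/-- For an odd integer `n ≥ 3`, an integer `m ≥ 2`, and integers
`x, y` with `y ≥ 1` satisfying `x^n − m·y^n = ±1`, one has
`|x − m^{1/n}·y| ≤ 1/(c₁·y^{n−1})` with `c₁ = m^{(n−1)/n}·∏_{j=1}^{n−1}|sin(2πj/n)|`. -/
theorem stmt_1 (n : ℕ) (hn : 3 ≤ n) (hodd : Odd n) (m : ℤ) (hm : 2 ≤ m)
    (x y : ℤ) (hy : 1 ≤ y)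
    (h : x ^ n - m * y ^ n = 1 ∨ x ^ n - m * y ^ n = -1) :
    |(x : ℝ) - (m : ℝ) ^ ((1 : ℝ) / n) * (y : ℝ)| ≤
      1 / (((m : ℝ) ^ (((n : ℝ) - 1) / n) *
        ∏ j ∈ Finset.Icc 1 (n - 1), |Real.sin (2 * Real.pi * (j : ℝ) / n)|) *
        (y : ℝ) ^ (n - 1)) :=
  stmt_1_general n hodd m hm x y hy h
end

section
/- Let n ≥ 3 be an odd integer, let m ≥ 2 be an integer, and let x, y be integers with y ≥ 1 satisfying x^n − m·y^n = 1 or x^n − m·y^n = −1. If c₁·y^{n−2} > 2, where c₁ = m^{(n−1)/n}·∏_{j=1}^{n−1} |sin(2πj/n)|, then |m^{1/n} − x/y| < 1/(2y²). -/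
open Finset Polynomial Complex

/-!
Put `α = m^{1/n}`. Over `ℂ`, `x^n - m y^n = ∏_{j<n} (x - ζ^j α y)` with `ζ = e^{2πi/n}`, and this
product has absolute value `1`. The factor `j = 0` is `x - α y`; every other factor is at least its
imaginary part `α y |sin(2πj/n)|` in absolute value. Hence `|x - α y| · c₁ y^{n-1} ≤ 1`, and
`c₁ y^{n-2} > 2` turns this into `|x - α y| < 1/(2y)`.
-/

theorem IsPrimitiveRoot.pow_sub_pow_eq_prod_range_sub_pow_mul {R : Type*} [CommRing R] [IsDomain R]
    {ζ : R} {n : ℕ} (hζ : IsPrimitiveRoot ζ n) (hn : 0 < n) (x y : R) :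
    x ^ n - y ^ n = ∏ j ∈ range n, (x - ζ ^ j * y) := by
  classical
  have hroots : nthRootsFinset n (1 : R) = (range n).image (ζ ^ ·) := by
    ext; simp [nthRootsFinset_def, hζ.nthRoots_eq (one_pow n)]
  rw [hζ.pow_sub_pow_eq_prod_sub_mul x y hn, hroots, prod_image hζ.injOn_pow]

theorem Complex.abs_im_mul_abs_le_norm_ofReal_sub_mul_ofReal (z : ℂ) (a b : ℝ) :
    |z.im| * |b| ≤ ‖(a : ℂ) - z * b‖ :=
  calc |z.im| * |b| = |((a : ℂ) - z * b).im| := by simp [abs_mul]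
    _ ≤ _ := abs_im_le_norm _

theorem Complex.im_exp_two_pi_I_div_pow (n j : ℕ) :
    (exp (2 * Real.pi * I / n) ^ j).im = Real.sin (2 * Real.pi * j / n) := by
  rw [← exp_nat_mul, ← exp_ofReal_mul_I_im]
  congr 2
  push_cast
  ring

theorem abs_sub_mul_abs_pow_mul_prod_abs_sin_le_abs_pow_sub_pow (a b : ℝ) {n : ℕ} (hn : 0 < n) :
    |a - b| * |b| ^ (n - 1) * ∏ j ∈ Icc 1 (n - 1), |Real.sin (2 * Real.pi * j / n)| ≤
      |a ^ n - b ^ n| := by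
  set ζ := exp (2 * Real.pi * I / n)
  have hfactor : |a ^ n - b ^ n| = ∏ j ∈ range n, ‖(a : ℂ) - ζ ^ j * b‖ := by
    rw [← norm_prod, ← (isPrimitiveRoot_exp n hn.ne').pow_sub_pow_eq_prod_range_sub_pow_mul hn,
      ← ofReal_pow, ← ofReal_pow, ← ofReal_sub, norm_real, Real.norm_eq_abs]
  have hrange : range n = insert 0 (Icc 1 (n - 1)) := by
    ext j; simp only [mem_range, mem_insert, mem_Icc]; omega
  have hnontrivial : |b| ^ (n - 1) * ∏ j ∈ Icc 1 (n - 1), |Real.sin (2 * Real.pi * j / n)| ≤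
      ∏ j ∈ Icc 1 (n - 1), ‖(a : ℂ) - ζ ^ j * b‖ := by
    rw [show |b| ^ (n - 1) = ∏ _j ∈ Icc 1 (n - 1), |b| by simp, ← prod_mul_distrib]
    refine prod_le_prod (fun _ _ ↦ by positivity) fun j _ ↦ ?_
    rw [mul_comm, ← im_exp_two_pi_I_div_pow]
    exact abs_im_mul_abs_le_norm_ofReal_sub_mul_ofReal _ a b
  rw [hfactor, hrange, prod_insert (by simp), pow_zero, one_mul, ← ofReal_sub, norm_real,
    Real.norm_eq_abs, mul_assoc]
  exact mul_le_mul_of_nonneg_left hnontrivial (abs_nonneg _)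

theorem stmt_3_general (n : ℕ) (hn : 3 ≤ n) (m : ℤ) (hm : 2 ≤ m)
    (x y : ℤ) (hy : 1 ≤ y)
    (h : x ^ n - m * y ^ n = 1 ∨ x ^ n - m * y ^ n = -1)
    (hc : ((m : ℝ) ^ (((n : ℝ) - 1) / n) *
        ∏ j ∈ Finset.Icc 1 (n - 1), |Real.sin (2 * Real.pi * (j : ℝ) / n)|) *
        (y : ℝ) ^ (n - 2) > 2) :
    |(m : ℝ) ^ ((1 : ℝ) / n) - (x : ℝ) / (y : ℝ)| < 1 / (2 * (y : ℝ) ^ 2) := by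
  have hm0 : (0 : ℝ) < m := by exact_mod_cast (by omega : (0 : ℤ) < m)
  have hy0 : (0 : ℝ) < y := by exact_mod_cast (by omega : (0 : ℤ) < y)
  have hroot : ((m : ℝ) ^ ((1 : ℝ) / n)) ^ n = m := by
    rw [one_div]; exact Real.rpow_inv_natCast_pow hm0.le (by omega)
  have hroot_pred : ((m : ℝ) ^ ((1 : ℝ) / n)) ^ (n - 1) = (m : ℝ) ^ (((n : ℝ) - 1) / n) := by
    rw [← Real.rpow_natCast, ← Real.rpow_mul hm0.le, Nat.cast_pred (by omega)]
    ring_nf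
  set α := (m : ℝ) ^ ((1 : ℝ) / n)
  have hα : 0 < α := by positivity
  set c₁ := (m : ℝ) ^ (((n : ℝ) - 1) / n) *
    ∏ j ∈ Finset.Icc 1 (n - 1), |Real.sin (2 * Real.pi * (j : ℝ) / n)|
  have hunit : |(x : ℝ) ^ n - m * y ^ n| = 1 := by
    rw [show (x : ℝ) ^ n - m * y ^ n = ((x ^ n - m * y ^ n : ℤ) : ℝ) by push_cast; ring]
    rcases h with h | h <;> simp [h]
  have hkey : |x - α * y| * (c₁ * y ^ (n - 1)) ≤ 1 := by
    have := abs_sub_mul_abs_pow_mul_prod_abs_sin_le_abs_pow_sub_pow x (α * y) (by omega : 0 < n)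
    rw [mul_pow, hroot, abs_of_pos (mul_pos hα hy0), mul_pow, hroot_pred, hunit] at this
    linarith
  have hlarge : 2 * (y : ℝ) < c₁ * y ^ (n - 1) := by
    rw [show n - 1 = n - 2 + 1 by omega, pow_succ]
    nlinarith
  have hclose : |x - α * y| * (2 * y) < 1 := by
    nlinarith [abs_nonneg ((x : ℝ) - α * y)]
  rw [show α - x / y = -((x - α * y) / y) by field_simp; ring, abs_neg, abs_div, abs_of_pos hy0,
    div_lt_div_iff₀ hy0 (by positivity)]
  nlinarith

/-- For an odd integer `n ≥ 3`, an integer `m ≥ 2`, and integers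
`x, y` with `y ≥ 1` satisfying `x^n − m·y^n = ±1`: if `c₁·y^{n−2} > 2`, where
`c₁ = m^{(n−1)/n}·∏_{j=1}^{n−1}|sin(2πj/n)|`, then `|m^{1/n} − x/y| < 1/(2y²)`. -/
theorem stmt_3 (n : ℕ) (hn : 3 ≤ n) (hodd : Odd n) (m : ℤ) (hm : 2 ≤ m)
    (x y : ℤ) (hy : 1 ≤ y)
    (h : x ^ n - m * y ^ n = 1 ∨ x ^ n - m * y ^ n = -1)
    (hc : ((m : ℝ) ^ (((n : ℝ) - 1) / n) *
        ∏ j ∈ Finset.Icc 1 (n - 1), |Real.sin (2 * Real.pi * (j : ℝ) / n)|) *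
        (y : ℝ) ^ (n - 2) > 2) :
    |(m : ℝ) ^ ((1 : ℝ) / n) - (x : ℝ) / (y : ℝ)| < 1 / (2 * (y : ℝ) ^ 2) :=
  stmt_3_general n hn m hm x y hy h hc
end

section
/- Let n ≥ 3 be an odd integer and let m ≥ 2 be an integer such that m^{(n−1)/n} > 2^n/n (real power). Then every pair of integers x, y with y ≥ 1 satisfying x^n − m·y^n = 1 or x^n − m·y^n = −1 obeys |m^{1/n} − x/y| < 1/(2y²). -/
/-!
Put `α = m^{1/n}`. Since `n` is odd and `x^n = m y^n ± 1 > 0`, `x` is positive, and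
factoring `x^n - (α y)^n = (x - α y) · ∑ x^i (α y)^{n-1-i}` with all terms nonnegative gives
`(α y)^{n-1} |x - α y| ≤ 1`. The hypothesis on `m` says `α^{n-1} > 2^n/n ≥ 2`, so
`(α y)^{n-1} > 2 y` and therefore `|x - α y| < 1/(2y)`; dividing by `y` gives the claim.
-/

theorem pow_pred_mul_abs_sub_le_abs_pow_sub_pow {R : Type*} [CommRing R] [LinearOrder R]
    [IsStrictOrderedRing R] {x b : R} (hx : 0 ≤ x) (hb : 0 ≤ b) {n : ℕ} (hn : n ≠ 0) :
    b ^ (n - 1) * |x - b| ≤ |x ^ n - b ^ n| := by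
  have hterm : ∀ i ∈ Finset.range n, 0 ≤ x ^ i * b ^ (n - 1 - i) := fun i _ => by positivity
  rw [← geom_sum₂_mul, abs_mul, abs_of_nonneg (Finset.sum_nonneg hterm)]
  gcongr
  simpa using Finset.single_le_sum hterm (Finset.mem_range.2 (Nat.pos_of_ne_zero hn))

theorem two_mul_le_two_pow (n : ℕ) : 2 * n ≤ 2 ^ n := by
  rcases n with _ | n
  · simp
  · rw [pow_succ']
    exact Nat.mul_le_mul_left 2 Nat.lt_two_pow_self

theorem two_le_two_pow_div {n : ℕ} (hn : n ≠ 0) : (2 : ℝ) ≤ 2 ^ n / n := by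
  rw [le_div_iff₀ (by positivity)]
  exact_mod_cast two_mul_le_two_pow n

theorem abs_sub_div_lt_of_abs_pow_sub_mul_pow_le_one {α x y : ℝ} {n : ℕ} (hα : 0 < α)
    (hαn : 2 < α ^ (n - 1)) (hx : 0 ≤ x) (hy : 1 ≤ y) (h : |x ^ n - (α * y) ^ n| ≤ 1) :
    |α - x / y| < 1 / (2 * y ^ 2) := by
  have hn : n - 1 ≠ 0 := by
    rintro hn
    norm_num [hn] at hαn
  have hy0 : 0 < y := one_pos.trans_le hy
  have hgrowth : 2 * y < (α * y) ^ (n - 1) :=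
    calc 2 * y ≤ 2 * y ^ (n - 1) := by gcongr; exact le_self_pow₀ hy hn
      _ < α ^ (n - 1) * y ^ (n - 1) := by gcongr
      _ = (α * y) ^ (n - 1) := (mul_pow α y (n - 1)).symm
  have hclose : |x - α * y| < 1 / (2 * y) := by
    have hbound := (pow_pred_mul_abs_sub_le_abs_pow_sub_pow hx (by positivity)
      (by omega : n ≠ 0)).trans h
    calc |x - α * y| ≤ 1 / (α * y) ^ (n - 1) := by
          rw [le_div_iff₀ (by positivity), mul_comm]; exact hbound
      _ < 1 / (2 * y) := one_div_lt_one_div_of_lt (by positivity) hgrowth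
  calc |α - x / y| = |x - α * y| / y := by
        rw [← abs_of_pos hy0, ← abs_div, abs_sub_comm, abs_of_pos hy0]
        congr 1
        field_simp
    _ < 1 / (2 * y) / y := by gcongr
    _ = 1 / (2 * y ^ 2) := by ring

theorem stmt_6_general (n : ℕ) (hodd : Odd n) (m : ℤ) (hm : 2 ≤ m)
    (hbig : (m : ℝ) ^ (((n : ℝ) - 1) / n) > 2 ^ n / (n : ℝ)) :
    ∀ x y : ℤ, 1 ≤ y →
      (x ^ n - m * y ^ n = 1 ∨ x ^ n - m * y ^ n = -1) →
      |(m : ℝ) ^ ((1 : ℝ) / n) - (x : ℝ) / (y : ℝ)| < 1 / (2 * (y : ℝ) ^ 2) := by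
  intro x y hy hxy
  have hn : n ≠ 0 := hodd.pos.ne'
  have hm0 : (0 : ℝ) < m := by exact_mod_cast (by omega : (0 : ℤ) < m)
  set α : ℝ := (m : ℝ) ^ ((1 : ℝ) / n) with hα
  have hαn : α ^ n = m := by
    rw [hα, one_div]; exact Real.rpow_inv_natCast_pow hm0.le hn
  have hαn1 : α ^ (n - 1) = (m : ℝ) ^ (((n : ℝ) - 1) / n) := by
    rw [hα, ← Real.rpow_natCast, ← Real.rpow_mul hm0.le, Nat.cast_sub (by omega)]
    ring_nf
  have hx : 0 < x := by
    have hxn : 0 < x ^ n := by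
      rcases hxy with h | h <;> nlinarith [one_le_pow₀ (n := n) hy]
    exact hodd.pow_pos_iff.1 hxn
  have hsol : |x ^ n - m * y ^ n| ≤ 1 := by
    rcases hxy with h | h <;> simp [h]
  refine abs_sub_div_lt_of_abs_pow_sub_mul_pow_le_one (n := n) (Real.rpow_pos_of_pos hm0 _) ?_
    (by exact_mod_cast hx.le) (by exact_mod_cast hy) ?_
  · exact hαn1 ▸ (two_le_two_pow_div hn).trans_lt hbig
  · rw [mul_pow, hαn]; exact_mod_cast hsol

/-- For an odd integer `n ≥ 3` and an integer `m ≥ 2` with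
`m^{(n−1)/n} > 2^n/n`, every integer solution `x, y` with `y ≥ 1` of
`x^n − m·y^n = ±1` satisfies `|m^{1/n} − x/y| < 1/(2y²)`. -/
theorem stmt_6 (n : ℕ) (hn : 3 ≤ n) (hodd : Odd n) (m : ℤ) (hm : 2 ≤ m)
    (hbig : (m : ℝ) ^ (((n : ℝ) - 1) / n) > 2 ^ n / (n : ℝ)) :
    ∀ x y : ℤ, 1 ≤ y →
      (x ^ n - m * y ^ n = 1 ∨ x ^ n - m * y ^ n = -1) →
      |(m : ℝ) ^ ((1 : ℝ) / n) - (x : ℝ) / (y : ℝ)| < 1 / (2 * (y : ℝ) ^ 2) :=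
  stmt_6_general n hodd m hm hbig
end

section
/- Let m ≥ 5 be an integer and let x, y be integers with y ≥ 1 satisfying x³ − m·y³ = 1 or x³ − m·y³ = −1. Then |m^{1/3} − x/y| < 1/(2y²). -/
/-! With `a = m^{1/3}`, the factorisation `x³ - (a y)³ = (x - a y)(x² + x·a y + (a y)²)` and
`x³ - m y³ = ±1` give `|x - a y| = 1 / D` with `D = x² + x·a y + (a y)² ≥ (3/4) a² y²`.
Since `a³ ≥ 5` forces `a² > 8/3`, this is `D > 2 y²`, so `|a - x/y| = |x - a y| / y < 1 / (2 y³)`. -/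

lemma three_div_four_mul_sq_le (u v : ℝ) : 3 / 4 * v ^ 2 ≤ u ^ 2 + u * v + v ^ 2 := by
  nlinarith [sq_nonneg (u + v / 2)]

lemma eight_div_three_lt_sq_of_five_le_pow_three {a : ℝ} (ha : 5 ≤ a ^ 3) : 8 / 3 < a ^ 2 := by
  nlinarith [sq_nonneg (a - 2), sq_nonneg (a + 2), sq_nonneg a]

lemma abs_sub_mul_lt_of_abs_pow_three_sub_le {a x y : ℝ} (ha : 8 / 3 < a ^ 2) (hy : 0 < y)
    (h : |x ^ 3 - a ^ 3 * y ^ 3| ≤ 1) : |x - a * y| < 1 / (2 * y ^ 2) := by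
  have hfactor : x ^ 3 - a ^ 3 * y ^ 3 = (x - a * y) * (x ^ 2 + x * (a * y) + (a * y) ^ 2) := by
    ring
  set D := x ^ 2 + x * (a * y) + (a * y) ^ 2
  have hD : 2 * y ^ 2 < D := by
    nlinarith [three_div_four_mul_sq_le x (a * y), mul_pos hy hy]
  have hDpos : 0 < D := by nlinarith
  have hprod : |x - a * y| * D ≤ 1 := by
    rwa [← abs_of_pos hDpos, ← abs_mul, ← hfactor]
  calc |x - a * y| ≤ 1 / D := by rwa [le_div_iff₀ hDpos]
    _ < 1 / (2 * y ^ 2) := one_div_lt_one_div_of_lt (by positivity) hD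

lemma abs_sub_div_lt_of_abs_pow_three_sub_le {a x y : ℝ} (ha : 8 / 3 < a ^ 2) (hy : 0 < y)
    (h : |x ^ 3 - a ^ 3 * y ^ 3| ≤ 1) : |a - x / y| < 1 / (2 * y ^ 3) := by
  calc |a - x / y| = |x - a * y| / y := by
        rw [abs_sub_comm, ← abs_of_pos hy, ← abs_div, abs_of_pos hy, sub_div,
          mul_div_cancel_right₀ _ hy.ne']
    _ < 1 / (2 * y ^ 2) / y :=
        div_lt_div_of_pos_right (abs_sub_mul_lt_of_abs_pow_three_sub_le ha hy h) hy
    _ = 1 / (2 * y ^ 3) := by rw [div_div]; ring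

/-- For an integer `m ≥ 5` and integers `x, y` with `y ≥ 1`
satisfying `x³ − m·y³ = ±1`, one has `|m^{1/3} − x/y| < 1/(2y²)`. -/
theorem stmt_7 (m : ℤ) (hm : 5 ≤ m) (x y : ℤ) (hy : 1 ≤ y)
    (h : x ^ 3 - m * y ^ 3 = 1 ∨ x ^ 3 - m * y ^ 3 = -1) :
    |(m : ℝ) ^ ((1 : ℝ) / 3) - (x : ℝ) / (y : ℝ)| < 1 / (2 * (y : ℝ) ^ 2) := by
  have hmR : (5 : ℝ) ≤ m := by exact_mod_cast hm
  have hyR : (1 : ℝ) ≤ y := by exact_mod_cast hy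
  have ha3 : ((m : ℝ) ^ ((1 : ℝ) / 3)) ^ 3 = m := by
    rw [one_div]
    exact_mod_cast Real.rpow_inv_natCast_pow (by linarith) (n := 3) (by norm_num)
  set a := (m : ℝ) ^ ((1 : ℝ) / 3)
  have hcube : |(x : ℝ) ^ 3 - a ^ 3 * (y : ℝ) ^ 3| ≤ 1 := by
    rw [ha3, abs_le]
    rcases h with h | h <;> constructor <;> exact_mod_cast (by omega)
  calc |a - x / y| < 1 / (2 * (y : ℝ) ^ 3) :=
        abs_sub_div_lt_of_abs_pow_three_sub_le
          (eight_div_three_lt_sq_of_five_le_pow_three (ha3 ▸ hmR)) (by linarith) hcube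
    _ ≤ 1 / (2 * (y : ℝ) ^ 2) := by
        gcongr
        norm_num
end

section
/- Let m ≥ 11 be an integer and let x, y be integers with y ≥ 1 satisfying x⁵ − m·y⁵ = 1 or x⁵ − m·y⁵ = −1. Then |m^{1/5} − x/y| < 1/(2y²). -/
/-!
Put `α = m^{1/5}` and `r = x/y`. The hypothesis says `|α⁵ - r⁵| = 1/y⁵`, and factoring
`α⁵ - r⁵ = (α - r)(α⁴ + α³r + ⋯ + r⁴)` with `r > 0` gives `|α - r| α⁴ ≤ 1/y⁵`.
Since `α⁵ = m ≥ 11` forces `α > 3/2`, hence `α⁴ > 2`, we get `|α - r| < 1/(2y⁵) ≤ 1/(2y²)`.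
-/

lemma abs_sub_mul_pow_pred_le_abs_pow_sub_pow {R : Type*} [CommRing R] [LinearOrder R]
    [IsStrictOrderedRing R] {a b : R} (ha : 0 ≤ a) (hb : 0 ≤ b) {n : ℕ} (hn : 1 ≤ n) :
    |a - b| * a ^ (n - 1) ≤ |a ^ n - b ^ n| := by
  have hterms : ∀ i ∈ Finset.range n, 0 ≤ a ^ i * b ^ (n - 1 - i) := fun _ _ => by positivity
  have hlast : a ^ (n - 1) ≤ ∑ i ∈ Finset.range n, a ^ i * b ^ (n - 1 - i) := by
    simpa using Finset.single_le_sum hterms (Finset.mem_range.2 (Nat.sub_lt hn one_pos))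
  rw [← geom_sum₂_mul, abs_mul, abs_of_nonneg (Finset.sum_nonneg hterms), mul_comm]
  gcongr

lemma abs_sub_div_pow_eq_of_abs_pow_sub_mul_pow_eq_one {m x y : ℤ} {n : ℕ} (hy : y ≠ 0)
    (h : |x ^ n - m * y ^ n| = 1) : |(m : ℝ) - ((x : ℝ) / y) ^ n| = 1 / |(y : ℝ)| ^ n := by
  have hyn : (y : ℝ) ^ n ≠ 0 := pow_ne_zero n (by exact_mod_cast hy)
  rw [div_pow, abs_sub_comm, div_sub' hyn, abs_div, abs_pow, mul_comm _ (m : ℝ)]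
  rw [show |(x : ℝ) ^ n - m * (y : ℝ) ^ n| = 1 by exact_mod_cast h]

/-- For an integer `m ≥ 11` and integers `x, y` with `y ≥ 1`
satisfying `x⁵ − m·y⁵ = ±1`, one has `|m^{1/5} − x/y| < 1/(2y²)`. -/
theorem stmt_8 (m : ℤ) (hm : 11 ≤ m) (x y : ℤ) (hy : 1 ≤ y)
    (h : x ^ 5 - m * y ^ 5 = 1 ∨ x ^ 5 - m * y ^ 5 = -1) :
    |(m : ℝ) ^ ((1 : ℝ) / 5) - (x : ℝ) / (y : ℝ)| < 1 / (2 * (y : ℝ) ^ 2) := by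
  set α : ℝ := (m : ℝ) ^ ((1 : ℝ) / 5)
  have hmR : (11 : ℝ) ≤ m := by exact_mod_cast hm
  have hyR : (1 : ℝ) ≤ y := by exact_mod_cast hy
  have hα : 0 ≤ α := Real.rpow_nonneg (by linarith) _
  have hα5 : α ^ 5 = m := by
    simpa [α, one_div] using Real.rpow_inv_natCast_pow (n := 5) (by linarith : (0 : ℝ) ≤ m)
      (by norm_num)
  have hx : 0 < x := by
    have : 0 < x ^ 5 := by rcases h with h | h <;> nlinarith [one_le_pow₀ (n := 5) hy]
    exact (Odd.pow_pos_iff (by decide)).1 this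
  have hdist : |α ^ 5 - ((x : ℝ) / y) ^ 5| = 1 / (y : ℝ) ^ 5 := by
    have hunit : |x ^ 5 - m * y ^ 5| = 1 := by rcases h with h | h <;> simp [h]
    rw [hα5, abs_sub_div_pow_eq_of_abs_pow_sub_mul_pow_eq_one (by omega) hunit,
      abs_of_pos (by positivity)]
  have hα4 : 2 < α ^ 4 := by
    have : (3 / 2 : ℝ) < α := lt_of_pow_lt_pow_left₀ 5 hα (by rw [hα5]; linarith)
    linarith [pow_lt_pow_left₀ this (by norm_num) four_ne_zero]
  have hfactor := abs_sub_mul_pow_pred_le_abs_pow_sub_pow hα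
    (by positivity : (0 : ℝ) ≤ x / y) (n := 5) (by norm_num)
  calc |α - x / y| ≤ 1 / (y : ℝ) ^ 5 / α ^ 4 := by
        rw [le_div_iff₀ (by positivity), ← hdist]
        exact hfactor
    _ < 1 / (2 * (y : ℝ) ^ 5) := by
        rw [div_div, mul_comm ((y : ℝ) ^ 5)]
        gcongr
    _ ≤ 1 / (2 * (y : ℝ) ^ 2) := by gcongr; norm_num [hyR]
end

section
/- Let m ≥ 30 be an integer and let x, y be integers with y ≥ 1 satisfying x⁷ − m·y⁷ = 1 or x⁷ − m·y⁷ = −1. Then |m^{1/7} − x/y| < 1/(2y²). -/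
/-- For an integer `m ≥ 30` and integers `x, y` with `y ≥ 1`
satisfying `x⁷ − m·y⁷ = ±1`, one has `|m^{1/7} − x/y| < 1/(2y²)`. -/
theorem stmt_9 (m : ℤ) (hm : 30 ≤ m) (x y : ℤ) (hy : 1 ≤ y)
    (h : x ^ 7 - m * y ^ 7 = 1 ∨ x ^ 7 - m * y ^ 7 = -1) :
    |(m : ℝ) ^ ((1 : ℝ) / 7) - (x : ℝ) / (y : ℝ)| < 1 / (2 * (y : ℝ) ^ 2) := by
  have hmR : (30 : ℝ) ≤ (m : ℝ) := by exact_mod_cast hm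
  have hmpos : (0 : ℝ) < (m : ℝ) := by linarith
  set α : ℝ := (m : ℝ) ^ ((1 : ℝ) / 7) with hαdef
  have hαpos : 0 < α := Real.rpow_pos_of_pos hmpos _
  have hα7 : α ^ 7 = (m : ℝ) := by
    rw [hαdef, ← Real.rpow_natCast (_ ^ _), ← Real.rpow_mul hmpos.le]
    norm_num
  have hyR : (1 : ℝ) ≤ (y : ℝ) := by exact_mod_cast hy
  have hypos : (0 : ℝ) < (y : ℝ) := by linarith
  -- x ≥ 1
  have hx7 : (29 : ℤ) ≤ x ^ 7 := by
    have hy7 : (1 : ℤ) ≤ y ^ 7 := one_le_pow₀ hy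
    rcases h with h | h <;> nlinarith
  have hx : (1 : ℤ) ≤ x := by
    by_contra hc
    push_neg at hc
    have : x ≤ 0 := by omega
    have : x ^ 7 ≤ 0 := Odd.pow_nonpos ⟨3, by norm_num⟩ this
    omega
  have hxR : (1 : ℝ) ≤ (x : ℝ) := by exact_mod_cast hx
  -- α^6 > 2
  have hα6 : (2 : ℝ) < α ^ 6 := by
    nlinarith [hαpos, hα7, sq_nonneg (α - 2), sq_nonneg (α ^ 3 - 2),
      sq_nonneg α, sq_nonneg (α ^ 2 - 2)]
  set b : ℝ := α * (y : ℝ) with hbdef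
  have hbpos : 0 < b := mul_pos hαpos hypos
  have hb7 : b ^ 7 = (m : ℝ) * (y : ℝ) ^ 7 := by
    rw [hbdef, mul_pow, hα7]
  set S : ℝ := (x:ℝ)^6 + (x:ℝ)^5*b + (x:ℝ)^4*b^2 + (x:ℝ)^3*b^3
      + (x:ℝ)^2*b^4 + (x:ℝ)*b^5 + b^6 with hSdef
  have hfac : (x:ℝ) ^ 7 - b ^ 7 = ((x:ℝ) - b) * S := by rw [hSdef]; ring
  have hS2y : 2 * (y:ℝ) < S := by
    have hb6 : α ^ 6 * (y:ℝ) ≤ b ^ 6 := by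
      have : (y:ℝ) ≤ (y:ℝ)^6 := le_self_pow₀ (by linarith) (by norm_num)
      calc α ^ 6 * (y:ℝ) ≤ α ^ 6 * (y:ℝ)^6 := by
            exact mul_le_mul_of_nonneg_left this (by positivity)
        _ = b ^ 6 := by rw [hbdef]; ring
    have h2y : 2 * (y:ℝ) < α ^ 6 * (y:ℝ) := by nlinarith
    have hrest : 0 ≤ S - b ^ 6 := by
      have hb := hbpos.le
      have hx0 : (0:ℝ) ≤ (x:ℝ) := by linarith
      rw [hSdef]
      have t1 : 0 ≤ (x:ℝ)^6 := pow_nonneg hx0 6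
      have t2 : 0 ≤ (x:ℝ)^5*b := mul_nonneg (pow_nonneg hx0 5) hb
      have t3 : 0 ≤ (x:ℝ)^4*b^2 := mul_nonneg (pow_nonneg hx0 4) (pow_nonneg hb 2)
      have t4 : 0 ≤ (x:ℝ)^3*b^3 := mul_nonneg (pow_nonneg hx0 3) (pow_nonneg hb 3)
      have t5 : 0 ≤ (x:ℝ)^2*b^4 := mul_nonneg (pow_nonneg hx0 2) (pow_nonneg hb 4)
      have t6 : 0 ≤ (x:ℝ)*b^5 := mul_nonneg hx0 (pow_nonneg hb 5)
      linarith
    linarith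
  have hSpos : 0 < S := by linarith
  have habs : |(x:ℝ) - b| * S = 1 := by
    have h1 : |(x:ℝ)^7 - b^7| = 1 := by
      rcases h with h | h
      · have : (x:ℝ)^7 - (m:ℝ)*(y:ℝ)^7 = 1 := by exact_mod_cast h
        rw [hb7, this]; norm_num
      · have : (x:ℝ)^7 - (m:ℝ)*(y:ℝ)^7 = -1 := by exact_mod_cast h
        rw [hb7, this]; norm_num
    rw [hfac, abs_mul, abs_of_pos hSpos] at h1
    exact h1
  have hdist : |(x:ℝ) - b| < 1 / (2 * (y:ℝ)) := by
    rw [lt_div_iff₀ (by linarith)]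
    calc |(x:ℝ) - b| * (2*(y:ℝ)) < |(x:ℝ) - b| * S := by
          rcases eq_or_lt_of_le (abs_nonneg ((x:ℝ) - b)) with he | hlt
          · exfalso; rw [← he, zero_mul] at habs; norm_num at habs
          · exact (mul_lt_mul_iff_right₀ hlt).2 hS2y
      _ = 1 := habs
  have hrw : α - (x:ℝ)/(y:ℝ) = (b - (x:ℝ)) / (y:ℝ) := by
    rw [hbdef]; field_simp
  rw [hrw, abs_div, abs_of_pos hypos, div_lt_iff₀ hypos, abs_sub_comm]
  rw [lt_div_iff₀ (by linarith : (0:ℝ) < 2*(y:ℝ))] at hdist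
  have : 1 / (2 * (y:ℝ)^2) * (y:ℝ) = 1 / (2 * (y:ℝ)) := by field_simp
  rw [this]
  rw [lt_div_iff₀ (by linarith : (0:ℝ) < 2*(y:ℝ))]
  exact hdist
end

section
/- Let m ≥ 315 be an integer and let x, y be integers with y ≥ 1 satisfying x¹¹ − m·y¹¹ = 1 or x¹¹ − m·y¹¹ = −1. Then |m^{1/11} − x/y| < 1/(2y²). -/
/-- For an integer `m ≥ 315` and integers `x, y` with `y ≥ 1`
satisfying `x¹¹ − m·y¹¹ = ±1`, one has `|m^{1/11} − x/y| < 1/(2y²)`. -/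
theorem stmt_10 (m : ℤ) (hm : 315 ≤ m) (x y : ℤ) (hy : 1 ≤ y)
    (h : x ^ 11 - m * y ^ 11 = 1 ∨ x ^ 11 - m * y ^ 11 = -1) :
    |(m : ℝ) ^ ((1 : ℝ) / 11) - (x : ℝ) / (y : ℝ)| < 1 / (2 * (y : ℝ) ^ 2) := by
  have hv1 : (1:ℝ) ≤ (y:ℝ) := by exact_mod_cast hy
  have hv0 : (0:ℝ) < (y:ℝ) := by linarith
  have hm' : (315:ℝ) ≤ (m:ℝ) := by exact_mod_cast hm
  set b : ℝ := (m:ℝ) ^ ((1:ℝ)/11) with hbdef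
  have hm0 : (0:ℝ) ≤ (m:ℝ) := by linarith
  have hb0 : 0 < b := Real.rpow_pos_of_pos (by linarith) _
  have hb11 : b ^ 11 = (m:ℝ) := by
    rw [hbdef, ← Real.rpow_natCast ((m:ℝ)^((1:ℝ)/11)) 11, ← Real.rpow_mul hm0]
    norm_num
  have hb32 : (3/2:ℝ) ≤ b := by
    by_contra hc
    push_neg at hc
    have h2 : b ^ 11 < (3/2:ℝ) ^ 11 :=
      pow_lt_pow_left₀ hc hb0.le (by norm_num)
    rw [hb11] at h2
    norm_num at h2
    linarith
  have hS2 : (2:ℝ) < b ^ 10 := by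
    calc (2:ℝ) < (3/2:ℝ)^10 := by norm_num
    _ ≤ b ^ 10 := pow_le_pow_left₀ (by norm_num) hb32 10
  have hy11 : (1:ℤ) ≤ y ^ 11 := by
    have := pow_le_pow_left₀ (by norm_num : (0:ℤ) ≤ 1) hy 11
    simpa using this
  have hx1 : (1:ℤ) ≤ x := by
    by_contra hc
    push_neg at hc
    have hx0 : x ≤ 0 := by omega
    have : x ^ 11 ≤ 0 := Odd.pow_nonpos (by decide) hx0
    rcases h with h | h <;> nlinarith
  have hε : |((x:ℝ))^11 - (m:ℝ)*(y:ℝ)^11| = 1 := by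
    rcases h with h | h
    · have h' : ((x:ℝ))^11 - (m:ℝ)*(y:ℝ)^11 = 1 := by exact_mod_cast h
      rw [h']; norm_num
    · have h' : ((x:ℝ))^11 - (m:ℝ)*(y:ℝ)^11 = -1 := by exact_mod_cast h
      rw [h']; norm_num
  set a : ℝ := (x:ℝ)/(y:ℝ) with hadef
  have hx0R : (0:ℝ) < (x:ℝ) := by exact_mod_cast hx1.trans_lt' (by norm_num)
  have ha0 : 0 < a := div_pos hx0R hv0
  set S : ℝ := ∑ i ∈ Finset.range 11, a ^ i * b ^ (10 - i) with hSdef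
  have hSge : b ^ 10 ≤ S := by
    have h0 : a ^ 0 * b ^ (10 - 0) ≤ S :=
      Finset.single_le_sum (f := fun i => a ^ i * b ^ (10 - i))
        (fun i _ => by positivity) (by simp)
    simpa using h0
  have hS0 : 0 < S := lt_of_lt_of_le (by positivity) hSge
  have hkey : S * (a - b) = a ^ 11 - b ^ 11 := geom_sum₂_mul a b 11
  have hab11 : |a ^ 11 - b ^ 11| = 1 / (y:ℝ) ^ 11 := by
    have heq : a ^ 11 - b ^ 11 = ((x:ℝ)^11 - (m:ℝ) * (y:ℝ)^11) / (y:ℝ)^11 := by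
      rw [hadef, hb11]
      field_simp
    rw [heq, abs_div, hε, abs_of_pos (by positivity)]
  have habs : |a - b| * S = 1 / (y:ℝ)^11 := by
    rw [← hab11, ← hkey, abs_mul, abs_of_pos hS0]; ring
  have h1 : |a - b| = 1/((y:ℝ)^11 * S) := by
    field_simp at habs ⊢
    linarith [habs]
  have hgoal : |a - b| < 1/(2*(y:ℝ)^2) := by
    rw [h1]
    apply one_div_lt_one_div_of_lt (by positivity)
    have hy2 : (y:ℝ)^2 ≤ (y:ℝ)^11 := pow_le_pow_right₀ hv1 (by norm_num)
    have hS2' : (2:ℝ) < S := lt_of_lt_of_le hS2 hSge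
    nlinarith [pow_pos hv0 2, pow_pos hv0 11]
  rw [abs_sub_comm] at hgoal
  exact hgoal
end

section
/- Let m ≥ 1079 be an integer and let x, y be integers with y ≥ 1 satisfying x¹³ − m·y¹³ = 1 or x¹³ − m·y¹³ = −1. Then |m^{1/13} − x/y| < 1/(2y²). -/
/-!
Put `α = m^{1/13}` and `b = α y`. Then `x¹³ - b¹³ = ±1`, and factoring
`x¹³ - b¹³ = (x - b) ∑ xⁱ b¹²⁻ⁱ` with `x > 0` gives `b¹² |x - b| ≤ 1`.
Since `α¹³ = m > 4` forces `α¹² > 2`, we get `b¹² > 2y`, hence `|x - b| < 1/(2y)`;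
dividing by `y` gives the claim.
-/

lemma pow_mul_abs_sub_le_abs_pow_succ_sub_pow_succ {x b : ℝ} (hx : 0 ≤ x) (hb : 0 ≤ b)
    (n : ℕ) : b ^ n * |x - b| ≤ |x ^ (n + 1) - b ^ (n + 1)| := by
  set S := ∑ i ∈ Finset.range (n + 1), x ^ i * b ^ (n + 1 - 1 - i)
  have hS : b ^ n ≤ S := by
    simpa [S] using Finset.single_le_sum (f := fun i => x ^ i * b ^ (n + 1 - 1 - i))
      (fun i _ => by positivity) (Finset.mem_range.2 n.succ_pos)
  rw [← geom_sum₂_mul x b (n + 1), abs_mul, abs_of_nonneg (by positivity : (0 : ℝ) ≤ S)]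
  exact mul_le_mul_of_nonneg_right hS (abs_nonneg _)

lemma two_lt_pow_of_four_lt_pow_succ {α : ℝ} (hα0 : 0 ≤ α) {n : ℕ} (hn : n ≠ 0)
    (h : 4 < α ^ (n + 1)) : 2 < α ^ n := by
  by_contra! hαn
  have hα : α ≤ 2 := by
    by_contra! hα
    linarith [le_self_pow₀ (by linarith : (1 : ℝ) ≤ α) hn]
  nlinarith [pow_succ α n]

lemma abs_sub_div_lt_of_abs_pow_sub_le_one {α x y : ℝ} {n : ℕ} (hα : 0 ≤ α) (hx : 0 ≤ x)
    (hy : 1 ≤ y) (hαn : 2 < α ^ n) (h : |x ^ (n + 1) - α ^ (n + 1) * y ^ (n + 1)| ≤ 1) :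
    |α - x / y| < 1 / (2 * y ^ 2) := by
  have hn : n ≠ 0 := by rintro rfl; norm_num at hαn
  have hy0 : 0 < y := by linarith
  have h2y : 2 * y < (α * y) ^ n := calc
    2 * y ≤ 2 * y ^ n := by gcongr; exact le_self_pow₀ hy hn
    _ < α ^ n * y ^ n := by gcongr
    _ = (α * y) ^ n := (mul_pow α y _).symm
  have hb : (α * y) ^ n * |x - α * y| ≤ 1 := by
    rw [← mul_pow] at h
    exact (pow_mul_abs_sub_le_abs_pow_succ_sub_pow_succ hx (by positivity) n).trans h
  have hxb : |x - α * y| < 1 / (2 * y) := by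
    rw [lt_div_iff₀ (by positivity)]
    nlinarith [abs_nonneg (x - α * y)]
  have hsplit : α - x / y = -((x - α * y) / y) := by field_simp; ring
  rw [hsplit, abs_neg, abs_div, abs_of_pos hy0, div_lt_iff₀ hy0]
  calc |x - α * y| < 1 / (2 * y) := hxb
    _ = 1 / (2 * y ^ 2) * y := by field_simp

lemma Int.pos_of_abs_pow_sub_mul_pow_le_one {x y m : ℤ} {n : ℕ} (hn : Odd n) (hm : 2 ≤ m)
    (hy : 1 ≤ y) (h : |x ^ n - m * y ^ n| ≤ 1) : 0 < x := by
  have hyn : 1 ≤ y ^ n := one_le_pow₀ hy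
  rw [← hn.pow_pos_iff]
  nlinarith [(abs_le.1 h).1]

/-- For an integer `m ≥ 1079` and integers `x, y` with `y ≥ 1`
satisfying `x¹³ − m·y¹³ = ±1`, one has `|m^{1/13} − x/y| < 1/(2y²)`. -/
theorem stmt_11 (m : ℤ) (hm : 1079 ≤ m) (x y : ℤ) (hy : 1 ≤ y)
    (h : x ^ 13 - m * y ^ 13 = 1 ∨ x ^ 13 - m * y ^ 13 = -1) :
    |(m : ℝ) ^ ((1 : ℝ) / 13) - (x : ℝ) / (y : ℝ)| < 1 / (2 * (y : ℝ) ^ 2) := by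
  have hm0 : (0 : ℝ) ≤ m := by exact_mod_cast (by omega : (0 : ℤ) ≤ m)
  have hα13 : ((m : ℝ) ^ ((1 : ℝ) / 13)) ^ 13 = m := by
    rw [one_div]; exact_mod_cast Real.rpow_inv_natCast_pow hm0 (by norm_num : 13 ≠ 0)
  set α := (m : ℝ) ^ ((1 : ℝ) / 13)
  have hα0 : 0 ≤ α := Real.rpow_nonneg hm0 _
  have habs : |x ^ 13 - m * y ^ 13| ≤ 1 := by rcases h with h | h <;> simp [h]
  have hx : 0 < x := Int.pos_of_abs_pow_sub_mul_pow_le_one (by decide) (by omega) hy habs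
  have hα12 : 2 < α ^ 12 := two_lt_pow_of_four_lt_pow_succ hα0 (by norm_num) <| by
    rw [hα13]; exact_mod_cast (by omega : 4 < m)
  refine abs_sub_div_lt_of_abs_pow_sub_le_one hα0 (by positivity)
    (by exact_mod_cast hy) hα12 ?_
  rw [hα13]
  exact_mod_cast habs
end
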